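/- arXiv:2103.08459 — 5 statements merged into one kernel-verified Lean document; each statement's English description precedes it below -/
import Mathlib

section
/- Let V be a finite set of system variables partitioned into inputs I and outputs O. Let L ⊆ (2^V)^ω be a specification language, let V1, V2 ⊆ V with V1 ∪ V2 = V and V1 ∩ V2 ⊆ I, and let L1 ⊆ (2^{V1})^ω and L2 ⊆ (2^{V2})^ω be languages with L1 ∥ L2 = L. Suppose f1c : (2^{V1})* → 2^{I ∩ V1} is a counterstrategy for L1, i.e., every word compatible with f1c lies in the complement of L1. Fix any valuation μ ∈ 2^{I \ V1} and define fc : (2^V)* → 2^I by fc(σ) = f1c(σ ∩ V1) ∪ μ, where σ ∩ V1 restricts each letter of the finite word σ to V1. Then fc is a counterstrategy for L, i.e., every infinite word compatible with fc lies in the complement of L. -/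
namespace SpecDecomp

variable {α : Type*}

/-- Restriction of an infinite word: intersect each letter with `X`. -/
def restrict (σ : ℕ → Set α) (X : Set α) : ℕ → Set α := fun n => σ n ∩ X

/-- Restriction of a finite word (history): intersect each letter with `X`. -/
def restrictFin (h : List (Set α)) (X : Set α) : List (Set α) := h.map (· ∩ X)

/-- Letterwise union of infinite words. -/
def wordUnion (σ₁ σ₂ : ℕ → Set α) : ℕ → Set α := fun n => σ₁ n ∪ σ₂ n

/-- The set of infinite words over the alphabet `2^W`. -/
def WordsOver (W : Set α) : Set (ℕ → Set α) := {σ | ∀ n, σ n ⊆ W}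

/-- Non-contradictory composition of a language `L₁` over `2^{W₁}` and a
language `L₂` over `2^{W₂}`. -/
def comp (L₁ : Set (ℕ → Set α)) (W₁ : Set α) (L₂ : Set (ℕ → Set α)) (W₂ : Set α) :
    Set (ℕ → Set α) :=
  {σ | ∃ σ₁ ∈ L₁, ∃ σ₂ ∈ L₂, restrict σ₁ W₂ = restrict σ₂ W₁ ∧ σ = wordUnion σ₁ σ₂}

/-- The finite history consisting of the first `n` letters of `σ`. -/
def hist (σ : ℕ → Set α) (n : ℕ) : List (Set α) := (List.range n).map σ

/-- An infinite word over `2^W` is compatible with the implementation `f`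
(for variables `W`, inputs `Iw`, outputs `Ow`). -/
def CompatibleImpl (W Iw Ow : Set α) (f : List (Set α) → Set α → Set α)
    (σ : ℕ → Set α) : Prop :=
  (∀ n, σ n ⊆ W) ∧ ∀ n, f (hist σ n) (σ n ∩ Iw) = σ n ∩ Ow

/-- The implementation `f` realizes the language `L`. -/
def Realizes (W Iw Ow : Set α) (f : List (Set α) → Set α → Set α)
    (L : Set (ℕ → Set α)) : Prop :=
  ∀ σ, CompatibleImpl W Iw Ow f σ → σ ∈ L

/-- `L` is realizable over variables `W` with inputs `Iw` and outputs `Ow`. -/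
def Realizable (W Iw Ow : Set α) (L : Set (ℕ → Set α)) : Prop :=
  ∃ f : List (Set α) → Set α → Set α,
    (∀ h i, f h i ⊆ Ow) ∧ Realizes W Iw Ow f L

/-- An infinite word over `2^W` is compatible with the counterstrategy `fc`. -/
def CompatibleCounter (W Iw : Set α) (fc : List (Set α) → Set α)
    (σ : ℕ → Set α) : Prop :=
  (∀ n, σ n ⊆ W) ∧ ∀ n, fc (hist σ n) = σ n ∩ Iw

/-- `fc` is a counterstrategy for `L`: every compatible word lies in the
complement of `L`. -/
def Counterstrategy (W Iw : Set α) (fc : List (Set α) → Set α)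
    (L : Set (ℕ → Set α)) : Prop :=
  ∀ σ, CompatibleCounter W Iw fc σ → σ ∉ L

/-- extension of a counterstrategy for the subspecification `L₁`
to a counterstrategy for the full specification `L`. -/
theorem counterstrategy_extension
    (V I O : Set α) (hVfin : V.Finite) (hpart : I ∪ O = V) (hIO : I ∩ O = ∅)
    (V₁ V₂ : Set α) (hV₁ : V₁ ⊆ V) (hV₂ : V₂ ⊆ V)
    (hcup : V₁ ∪ V₂ = V) (hcap : V₁ ∩ V₂ ⊆ I)
    (L L₁ L₂ : Set (ℕ → Set α))
    (hL : L ⊆ WordsOver V) (hL₁ : L₁ ⊆ WordsOver V₁) (hL₂ : L₂ ⊆ WordsOver V₂)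
    (hcomp : comp L₁ V₁ L₂ V₂ = L)
    (f₁c : List (Set α) → Set α)
    (hf₁c_range : ∀ h, f₁c h ⊆ I ∩ V₁)
    (hf₁c : Counterstrategy V₁ (I ∩ V₁) f₁c L₁)
    (μ : Set α) (hμ : μ ⊆ I \ V₁) :
    Counterstrategy V I (fun h => f₁c (restrictFin h V₁) ∪ μ) L := by
  intro σ ⟨hσV, hσf⟩ hσL
  rw [← hcomp] at hσL
  obtain ⟨σ₁, hσ₁, σ₂, hσ₂, hagree, hunion⟩ := hσL
  -- σ₁ = restrict σ V₁
  have hσ₁eq : ∀ n, σ₁ n = σ n ∩ V₁ := by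
    intro n
    have h1 : σ₁ n ⊆ V₁ := hL₁ hσ₁ n
    have h2 : σ₂ n ∩ V₁ = σ₁ n ∩ V₂ := by
      have := congrFun hagree n
      simpa [restrict, Set.inter_comm] using this.symm
    have : σ n = σ₁ n ∪ σ₂ n := congrFun hunion n
    rw [this, Set.union_inter_distrib_right, Set.inter_eq_left.mpr h1, h2]
    exact (Set.union_eq_left.mpr (Set.inter_subset_left)).symm
  have hhist : ∀ n, hist σ₁ n = restrictFin (hist σ n) V₁ := by
    intro n
    simp only [hist, restrictFin, List.map_map]
    exact List.map_congr_left fun m _ => hσ₁eq m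
  apply hf₁c σ₁ _ hσ₁
  refine ⟨fun n => hL₁ hσ₁ n, fun n => ?_⟩
  have h := hσf n
  simp only [← hhist n] at h
  have hμV₁ : μ ∩ V₁ = ∅ := by
    ext x; simp only [Set.mem_inter_iff, Set.mem_empty_iff_false, iff_false]
    rintro ⟨hx, hx'⟩; exact (hμ hx).2 hx'
  have := congrArg (· ∩ V₁) h
  simp only [Set.union_inter_distrib_right, hμV₁, Set.union_empty] at this
  rw [Set.inter_eq_left.mpr (fun x hx => (hf₁c_range _ hx).2)] at this
  rw [this, hσ₁eq n]
  ext x; simp [Set.mem_inter_iff]; tauto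

end SpecDecomp
end

section
/- Let V be a finite set of system variables partitioned into inputs I and outputs O. Let V1, V2 ⊆ V with V1 ∪ V2 = V and V1 ∩ V2 ⊆ I, and let L ⊆ (2^V)^ω, L1 ⊆ (2^{V1})^ω, L2 ⊆ (2^{V2})^ω be languages with L1 ∥ L2 = L. Suppose f1 : (2^{V1})* × 2^{I ∩ V1} → 2^{O ∩ V1} realizes L1 and f2 : (2^{V2})* × 2^{I ∩ V2} → 2^{O ∩ V2} realizes L2. Define f : (2^V)* × 2^I → 2^O by f(σ, i) = f1(σ ∩ V1, i ∩ V1) ∪ f2(σ ∩ V2, i ∩ V2), where σ ∩ Vk restricts each letter of the finite word σ to Vk. Then f realizes L, i.e., every infinite word compatible with f lies in L. -/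
namespace SpecDecomp

variable {α : Type*}

/-- the composition of implementations realizing independent
sublanguages realizes the composed language. -/
theorem composed_implementation_realizes
    (V I O : Set α) (hVfin : V.Finite) (hpart : I ∪ O = V) (hIO : I ∩ O = ∅)
    (V₁ V₂ : Set α) (hV₁ : V₁ ⊆ V) (hV₂ : V₂ ⊆ V)
    (hcup : V₁ ∪ V₂ = V) (hcap : V₁ ∩ V₂ ⊆ I)
    (L L₁ L₂ : Set (ℕ → Set α))
    (hL : L ⊆ WordsOver V) (hL₁ : L₁ ⊆ WordsOver V₁) (hL₂ : L₂ ⊆ WordsOver V₂)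
    (hcomp : comp L₁ V₁ L₂ V₂ = L)
    (f₁ f₂ : List (Set α) → Set α → Set α)
    (hf₁r : ∀ h i, f₁ h i ⊆ O ∩ V₁) (hf₂r : ∀ h i, f₂ h i ⊆ O ∩ V₂)
    (hf₁ : Realizes V₁ (I ∩ V₁) (O ∩ V₁) f₁ L₁)
    (hf₂ : Realizes V₂ (I ∩ V₂) (O ∩ V₂) f₂ L₂) :
    Realizes V I O
      (fun h i => f₁ (restrictFin h V₁) (i ∩ V₁) ∪ f₂ (restrictFin h V₂) (i ∩ V₂))
      L := by
  rintro σ ⟨hσW, hσf⟩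
  have hhist : ∀ (X : Set α) n, hist (restrict σ X) n = restrictFin (hist σ n) X := by
    intro X n
    simp [hist, restrictFin, restrict, List.map_map, Function.comp]
  -- values of the two component implementations along σ
  have key : ∀ n,
      f₁ (restrictFin (hist σ n) V₁) ((σ n ∩ I) ∩ V₁) = σ n ∩ O ∩ V₁ ∧
      f₂ (restrictFin (hist σ n) V₂) ((σ n ∩ I) ∩ V₂) = σ n ∩ O ∩ V₂ := by
    intro n
    have hn := hσf n
    simp only at hn
    set A := f₁ (restrictFin (hist σ n) V₁) ((σ n ∩ I) ∩ V₁) with hA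
    set B := f₂ (restrictFin (hist σ n) V₂) ((σ n ∩ I) ∩ V₂) with hB
    have hAsub : A ⊆ O ∩ V₁ := hf₁r _ _
    have hBsub : B ⊆ O ∩ V₂ := hf₂r _ _
    constructor
    · ext x
      constructor
      · intro hx
        have hx1 : x ∈ σ n ∩ O := hn ▸ Or.inl hx
        exact ⟨hx1, (hAsub hx).2⟩
      · rintro ⟨⟨hxσ, hxO⟩, hxV₁⟩
        have : x ∈ A ∪ B := hn ▸ ⟨hxσ, hxO⟩
        rcases this with h | h
        · exact h
        · exact absurd (hcap ⟨hxV₁, (hBsub h).2⟩) fun hxI =>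
            (Set.eq_empty_iff_forall_notMem.mp hIO x) ⟨hxI, hxO⟩
    · ext x
      constructor
      · intro hx
        have hx1 : x ∈ σ n ∩ O := hn ▸ Or.inr hx
        exact ⟨hx1, (hBsub hx).2⟩
      · rintro ⟨⟨hxσ, hxO⟩, hxV₂⟩
        have : x ∈ A ∪ B := hn ▸ ⟨hxσ, hxO⟩
        rcases this with h | h
        · exact absurd (hcap ⟨(hAsub h).2, hxV₂⟩) fun hxI =>
            (Set.eq_empty_iff_forall_notMem.mp hIO x) ⟨hxI, hxO⟩
        · exact h
  have hσ₁ : restrict σ V₁ ∈ L₁ := by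
    apply hf₁
    refine ⟨fun n => Set.inter_subset_right, fun n => ?_⟩
    rw [hhist]
    have : restrict σ V₁ n ∩ (I ∩ V₁) = (σ n ∩ I) ∩ V₁ := by
      simp only [restrict]; ext x; simp only [Set.mem_inter_iff]; tauto
    rw [this, (key n).1]
    simp only [restrict]; ext x; simp only [Set.mem_inter_iff]; tauto
  have hσ₂ : restrict σ V₂ ∈ L₂ := by
    apply hf₂
    refine ⟨fun n => Set.inter_subset_right, fun n => ?_⟩
    rw [hhist]
    have : restrict σ V₂ n ∩ (I ∩ V₂) = (σ n ∩ I) ∩ V₂ := by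
      simp only [restrict]; ext x; simp only [Set.mem_inter_iff]; tauto
    rw [this, (key n).2]
    simp only [restrict]; ext x; simp only [Set.mem_inter_iff]; tauto
  rw [← hcomp]
  refine ⟨restrict σ V₁, hσ₁, restrict σ V₂, hσ₂, ?_, ?_⟩
  · funext n; simp only [restrict]; ext x; simp only [Set.mem_inter_iff]; tauto
  · funext n
    simp only [wordUnion, restrict]
    ext x
    constructor
    · intro hx
      have : x ∈ V₁ ∪ V₂ := hcup ▸ hσW n hx
      rcases this with h | h
      · exact Or.inl ⟨hx, h⟩
      · exact Or.inr ⟨hx, h⟩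
    · rintro (⟨h, _⟩ | ⟨h, _⟩) <;> exact h

end SpecDecomp
end

section
/- Let V be a finite set of system variables partitioned into inputs I and outputs O. Let V1, V2 ⊆ V with V1 ∪ V2 = V and V1 ∩ V2 ⊆ I, and let L ⊆ (2^V)^ω, L1 ⊆ (2^{V1})^ω, L2 ⊆ (2^{V2})^ω be languages such that L1 and L2 are independent sublanguages of L, i.e., L1 ∥ L2 = L. Assume moreover that whenever Lk (k ∈ {1,2}) is not realizable by an implementation over variables Vk (with inputs I ∩ Vk and outputs O ∩ Vk), there exists a counterstrategy for Lk. Then L is realizable (by an implementation over variables V with inputs I and outputs O) if and only if both L1 and L2 are realizable. -/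
namespace SpecDecomp

variable {α : Type*}

/-- History of a restricted word is restriction of the history. -/
lemma hist_restrict (σ : ℕ → Set α) (X : Set α) (n : ℕ) :
    hist (restrict σ X) n = restrictFin (hist σ n) X := by
  simp [hist, restrict, restrictFin, List.map_map, Function.comp]

/-- Iterated-prefix construction for a letter-generating function `g`. -/
def mkPrefix (g : List (Set α) → Set α) : ℕ → List (Set α)
  | 0 => []
  | n + 1 => mkPrefix g n ++ [g (mkPrefix g n)]

lemma hist_mkPrefix (g : List (Set α) → Set α) (n : ℕ) :
    hist (fun k => g (mkPrefix g k)) n = mkPrefix g n := by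
  induction n with
  | zero => simp [hist, mkPrefix]
  | succ n ih =>
      simp only [hist, List.range_succ, List.map_append, List.map_cons,
        List.map_nil, mkPrefix]
      simp only [hist] at ih
      rw [ih]

lemma restrict_wordUnion_left (σ₁ σ₂ : ℕ → Set α) (V₁ V₂ : Set α)
    (h₁ : ∀ n, σ₁ n ⊆ V₁) (hnc : restrict σ₁ V₂ = restrict σ₂ V₁) :
    restrict (wordUnion σ₁ σ₂) V₁ = σ₁ := by
  funext n
  have hn : σ₁ n ∩ V₂ = σ₂ n ∩ V₁ := congrFun hnc n
  ext x
  simp only [restrict, wordUnion, Set.mem_inter_iff, Set.mem_union]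
  constructor
  · rintro ⟨hx | hx, hxV⟩
    · exact hx
    · have hx2 : x ∈ σ₂ n ∩ V₁ := ⟨hx, hxV⟩
      rw [← hn] at hx2; exact hx2.1
  · intro hx; exact ⟨Or.inl hx, h₁ n hx⟩

lemma restrict_wordUnion_right (σ₁ σ₂ : ℕ → Set α) (V₁ V₂ : Set α)
    (h₂ : ∀ n, σ₂ n ⊆ V₂) (hnc : restrict σ₁ V₂ = restrict σ₂ V₁) :
    restrict (wordUnion σ₁ σ₂) V₂ = σ₂ := by
  funext n
  have hn : σ₁ n ∩ V₂ = σ₂ n ∩ V₁ := congrFun hnc n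
  ext x
  simp only [restrict, wordUnion, Set.mem_inter_iff, Set.mem_union]
  constructor
  · rintro ⟨hx | hx, hxV⟩
    · have hx2 : x ∈ σ₁ n ∩ V₂ := ⟨hx, hxV⟩
      rw [hn] at hx2; exact hx2.1
    · exact hx
  · intro hx; exact ⟨Or.inr hx, h₂ n hx⟩

/-- Main impossibility lemma: a realization of `L` together with a
counterstrategy for a projected sublanguage `L'` is contradictory. -/
lemma counter_false (V I O W : Set α) (hpart : I ∪ O = V) (hIO : I ∩ O = ∅)
    (L L' : Set (ℕ → Set α))
    (hmem : ∀ σ ∈ L, restrict σ W ∈ L')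
    (f : List (Set α) → Set α → Set α) (hf : ∀ h i, f h i ⊆ O)
    (hreal : Realizes V I O f L)
    (fc : List (Set α) → Set α) (hfc : ∀ h, fc h ⊆ I ∩ W)
    (hcnt : Counterstrategy W (I ∩ W) fc L') : False := by
  set g : List (Set α) → Set α :=
    fun h => fc (restrictFin h W) ∪ f h (fc (restrictFin h W)) with hg
  set σ : ℕ → Set α := fun k => g (mkPrefix g k) with hσ
  have hhist : ∀ n, hist σ n = mkPrefix g n := hist_mkPrefix g
  have hIV : I ⊆ V := hpart ▸ Set.subset_union_left
  have hOV : O ⊆ V := hpart ▸ Set.subset_union_right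
  have hiI : ∀ n, fc (restrictFin (mkPrefix g n) W) ⊆ I :=
    fun n => (hfc _).trans Set.inter_subset_left
  have hσeq : ∀ n, σ n = fc (restrictFin (mkPrefix g n) W) ∪
      f (mkPrefix g n) (fc (restrictFin (mkPrefix g n) W)) := fun n => rfl
  have hσI : ∀ n, σ n ∩ I = fc (restrictFin (mkPrefix g n) W) := by
    intro n
    rw [hσeq n]
    ext x
    simp only [Set.mem_inter_iff, Set.mem_union]
    constructor
    · rintro ⟨hx | hx, hxI⟩
      · exact hx
      · have hxe : x ∈ I ∩ O := ⟨hxI, hf _ _ hx⟩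
        rw [hIO] at hxe; exact hxe.elim
    · intro hx; exact ⟨Or.inl hx, hiI n hx⟩
  have hσO : ∀ n, σ n ∩ O =
      f (mkPrefix g n) (fc (restrictFin (mkPrefix g n) W)) := by
    intro n
    rw [hσeq n]
    ext x
    simp only [Set.mem_inter_iff, Set.mem_union]
    constructor
    · rintro ⟨hx | hx, hxO⟩
      · have hxe : x ∈ I ∩ O := ⟨hiI n hx, hxO⟩
        rw [hIO] at hxe; exact hxe.elim
      · exact hx
    · intro hx; exact ⟨Or.inr hx, hf _ _ hx⟩
  have hcompat : CompatibleImpl V I O f σ := by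
    refine ⟨fun n => ?_, fun n => ?_⟩
    · rw [hσeq n]
      exact Set.union_subset ((hiI n).trans hIV) ((hf _ _).trans hOV)
    · rw [hhist n, hσI n, hσO n]
  have hσL : σ ∈ L := hreal σ hcompat
  have hσ'L' : restrict σ W ∈ L' := hmem σ hσL
  refine hcnt (restrict σ W) ⟨fun n => Set.inter_subset_right, fun n => ?_⟩ hσ'L'
  rw [hist_restrict, hhist n]
  ext x
  simp only [restrict, Set.mem_inter_iff]
  constructor
  · intro hx
    have h1 := hfc (restrictFin (mkPrefix g n) W) hx
    have h2 : x ∈ σ n ∩ I := by rw [hσI n]; exact hx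
    exact ⟨⟨h2.1, h1.2⟩, h1.1, h1.2⟩
  · rintro ⟨⟨hxσ, hxW⟩, hxI, -⟩
    have h2 : x ∈ σ n ∩ I := ⟨hxσ, hxI⟩
    rw [hσI n] at h2; exact h2


/-- equirealizability for independent sublanguages. -/
theorem equirealizable_independent_sublanguages
    (V I O : Set α) (hVfin : V.Finite) (hpart : I ∪ O = V) (hIO : I ∩ O = ∅)
    (V₁ V₂ : Set α) (hV₁ : V₁ ⊆ V) (hV₂ : V₂ ⊆ V)
    (hcup : V₁ ∪ V₂ = V) (hcap : V₁ ∩ V₂ ⊆ I)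
    (L L₁ L₂ : Set (ℕ → Set α))
    (hL : L ⊆ WordsOver V) (hL₁ : L₁ ⊆ WordsOver V₁) (hL₂ : L₂ ⊆ WordsOver V₂)
    (hcomp : comp L₁ V₁ L₂ V₂ = L)
    (hcs₁ : ¬ Realizable V₁ (I ∩ V₁) (O ∩ V₁) L₁ →
      ∃ fc : List (Set α) → Set α, (∀ h, fc h ⊆ I ∩ V₁) ∧
        Counterstrategy V₁ (I ∩ V₁) fc L₁)
    (hcs₂ : ¬ Realizable V₂ (I ∩ V₂) (O ∩ V₂) L₂ →
      ∃ fc : List (Set α) → Set α, (∀ h, fc h ⊆ I ∩ V₂) ∧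
        Counterstrategy V₂ (I ∩ V₂) fc L₂) :
    Realizable V I O L ↔
      (Realizable V₁ (I ∩ V₁) (O ∩ V₁) L₁ ∧ Realizable V₂ (I ∩ V₂) (O ∩ V₂) L₂) := by
  constructor
  · rintro ⟨f, hf, hreal⟩
    have hmem₁ : ∀ σ ∈ L, restrict σ V₁ ∈ L₁ := by
      intro σ hσ
      rw [← hcomp] at hσ
      obtain ⟨σ₁, hσ₁, σ₂, hσ₂, hnc, rfl⟩ := hσ
      rw [restrict_wordUnion_left σ₁ σ₂ V₁ V₂ (hL₁ hσ₁) hnc]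
      exact hσ₁
    have hmem₂ : ∀ σ ∈ L, restrict σ V₂ ∈ L₂ := by
      intro σ hσ
      rw [← hcomp] at hσ
      obtain ⟨σ₁, hσ₁, σ₂, hσ₂, hnc, rfl⟩ := hσ
      rw [restrict_wordUnion_right σ₁ σ₂ V₁ V₂ (hL₂ hσ₂) hnc]
      exact hσ₂
    constructor
    · by_contra h1
      obtain ⟨fc, hfc, hcnt⟩ := hcs₁ h1
      exact counter_false V I O V₁ hpart hIO L L₁ hmem₁ f hf hreal fc hfc hcnt
    · by_contra h2
      obtain ⟨fc, hfc, hcnt⟩ := hcs₂ h2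
      exact counter_false V I O V₂ hpart hIO L L₂ hmem₂ f hf hreal fc hfc hcnt
  · rintro ⟨⟨f₁, hf₁, hreal₁⟩, ⟨f₂, hf₂, hreal₂⟩⟩
    refine ⟨fun h i => f₁ (restrictFin h V₁) (i ∩ V₁) ∪ f₂ (restrictFin h V₂) (i ∩ V₂),
      fun h i => Set.union_subset ((hf₁ _ _).trans Set.inter_subset_left)
        ((hf₂ _ _).trans Set.inter_subset_left), ?_⟩
    rintro σ ⟨hsub, heq⟩
    have key₁ : ∀ n, f₁ (hist (restrict σ V₁) n) (restrict σ V₁ n ∩ (I ∩ V₁)) =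
        restrict σ V₁ n ∩ (O ∩ V₁) := by
      intro n
      have h1 : restrict σ V₁ n ∩ (I ∩ V₁) = σ n ∩ I ∩ V₁ := by
        ext x; simp only [restrict, Set.mem_inter_iff]; tauto
      have h2 : restrict σ V₁ n ∩ (O ∩ V₁) = σ n ∩ O ∩ V₁ := by
        ext x; simp only [restrict, Set.mem_inter_iff]; tauto
      rw [hist_restrict, h1, h2]
      have hu : f₁ (restrictFin (hist σ n) V₁) (σ n ∩ I ∩ V₁) ∪
          f₂ (restrictFin (hist σ n) V₂) (σ n ∩ I ∩ V₂) = σ n ∩ O := heq n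
      have hAO : f₁ (restrictFin (hist σ n) V₁) (σ n ∩ I ∩ V₁) ⊆ O ∩ V₁ := hf₁ _ _
      have hBO : f₂ (restrictFin (hist σ n) V₂) (σ n ∩ I ∩ V₂) ⊆ O ∩ V₂ := hf₂ _ _
      ext x
      constructor
      · intro hx
        have hxu : x ∈ σ n ∩ O := by rw [← hu]; exact Or.inl hx
        exact ⟨hxu, (hAO hx).2⟩
      · rintro ⟨hxσO, hxV₁⟩
        have hxu : x ∈ f₁ (restrictFin (hist σ n) V₁) (σ n ∩ I ∩ V₁) ∪
            f₂ (restrictFin (hist σ n) V₂) (σ n ∩ I ∩ V₂) := by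
          rw [hu]; exact hxσO
        rcases hxu with hx | hx
        · exact hx
        · have hxI : x ∈ I := hcap ⟨hxV₁, (hBO hx).2⟩
          have hxe : x ∈ I ∩ O := ⟨hxI, hxσO.2⟩
          rw [hIO] at hxe; exact hxe.elim
    have key₂ : ∀ n, f₂ (hist (restrict σ V₂) n) (restrict σ V₂ n ∩ (I ∩ V₂)) =
        restrict σ V₂ n ∩ (O ∩ V₂) := by
      intro n
      have h1 : restrict σ V₂ n ∩ (I ∩ V₂) = σ n ∩ I ∩ V₂ := by
        ext x; simp only [restrict, Set.mem_inter_iff]; tauto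
      have h2 : restrict σ V₂ n ∩ (O ∩ V₂) = σ n ∩ O ∩ V₂ := by
        ext x; simp only [restrict, Set.mem_inter_iff]; tauto
      rw [hist_restrict, h1, h2]
      have hu : f₁ (restrictFin (hist σ n) V₁) (σ n ∩ I ∩ V₁) ∪
          f₂ (restrictFin (hist σ n) V₂) (σ n ∩ I ∩ V₂) = σ n ∩ O := heq n
      have hAO : f₁ (restrictFin (hist σ n) V₁) (σ n ∩ I ∩ V₁) ⊆ O ∩ V₁ := hf₁ _ _
      have hBO : f₂ (restrictFin (hist σ n) V₂) (σ n ∩ I ∩ V₂) ⊆ O ∩ V₂ := hf₂ _ _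
      ext x
      constructor
      · intro hx
        have hxu : x ∈ σ n ∩ O := by rw [← hu]; exact Or.inr hx
        exact ⟨hxu, (hBO hx).2⟩
      · rintro ⟨hxσO, hxV₂⟩
        have hxu : x ∈ f₁ (restrictFin (hist σ n) V₁) (σ n ∩ I ∩ V₁) ∪
            f₂ (restrictFin (hist σ n) V₂) (σ n ∩ I ∩ V₂) := by
          rw [hu]; exact hxσO
        rcases hxu with hx | hx
        · have hxI : x ∈ I := hcap ⟨(hAO hx).2, hxV₂⟩
          have hxe : x ∈ I ∩ O := ⟨hxI, hxσO.2⟩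
          rw [hIO] at hxe; exact hxe.elim
        · exact hx
    have hσ₁ : restrict σ V₁ ∈ L₁ :=
      hreal₁ _ ⟨fun n => Set.inter_subset_right, key₁⟩
    have hσ₂ : restrict σ V₂ ∈ L₂ :=
      hreal₂ _ ⟨fun n => Set.inter_subset_right, key₂⟩
    rw [← hcomp]
    refine ⟨restrict σ V₁, hσ₁, restrict σ V₂, hσ₂, ?_, ?_⟩
    · funext n; ext x
      simp only [restrict, Set.mem_inter_iff]; tauto
    · funext n; ext x
      simp only [wordUnion, restrict, Set.mem_union, Set.mem_inter_iff]
      constructor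
      · intro hx
        have hxV : x ∈ V := hsub n hx
        rw [← hcup] at hxV
        rcases hxV with h | h
        · exact Or.inl ⟨hx, h⟩
        · exact Or.inr ⟨hx, h⟩
      · rintro (⟨hx, -⟩ | ⟨hx, -⟩) <;> exact hx


end SpecDecomp
end

section
/- Let φ = φ1 ∧ φ2 be an LTL formula over atomic propositions V, where the conjuncts satisfy prop(φ1) ⊆ V1 and prop(φ2) ⊆ V2 for sets V1, V2 with V1 ∪ V2 = V. Then the languages L1 = { σ ∈ (2^{V1})^ω | σ ⊨ φ1 } and L2 = { σ ∈ (2^{V2})^ω | σ ⊨ φ2 } are independent sublanguages of L(φ) = { σ ∈ (2^V)^ω | σ ⊨ φ }, i.e., L1 ∥ L2 = L(φ). -/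
namespace SpecDecomp

variable {α : Type*}

/-- Syntax of linear-time temporal logic. -/
inductive LTL (α : Type*) where
  | atom : α → LTL α
  | tt : LTL α
  | not : LTL α → LTL α
  | or : LTL α → LTL α → LTL α
  | and : LTL α → LTL α → LTL α
  | next : LTL α → LTL α
  | until_ : LTL α → LTL α → LTL α

namespace LTL

/-- The set of atomic propositions occurring in a formula
(`true` contributes no atomic propositions). -/
def props : LTL α → Set α
  | atom a => {a}
  | tt => ∅
  | not φ => props φ
  | or φ ψ => props φ ∪ props ψ
  | and φ ψ => props φ ∪ props ψ
  | next φ => props φ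
  | until_ φ ψ => props φ ∪ props ψ

/-- Satisfaction of an LTL formula at position `n` of the infinite word `σ`. -/
def SatAt (σ : ℕ → Set α) : LTL α → ℕ → Prop
  | atom a, n => a ∈ σ n
  | tt, _ => True
  | not φ, n => ¬ SatAt σ φ n
  | or φ ψ, n => SatAt σ φ n ∨ SatAt σ ψ n
  | and φ ψ, n => SatAt σ φ n ∧ SatAt σ ψ n
  | next φ, n => SatAt σ φ (n + 1)
  | until_ φ ψ, n =>
      ∃ m, n ≤ m ∧ SatAt σ ψ m ∧ ∀ k, n ≤ k → k < m → SatAt σ φ k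

/-- `σ ⊨ φ`. -/
def Sat (σ : ℕ → Set α) (φ : LTL α) : Prop := SatAt σ φ 0

/-- Implication, as the usual abbreviation `φ → ψ ≡ ¬φ ∨ ψ`. -/
def impl (φ ψ : LTL α) : LTL α := or (not φ) ψ

/-- The language of `φ` over the alphabet `2^W`. -/
def LangOver (φ : LTL α) (W : Set α) : Set (ℕ → Set α) :=
  {σ | (∀ n, σ n ⊆ W) ∧ Sat σ φ}

end LTL

lemma satAt_congr (φ : LTL α) (σ σ' : ℕ → Set α)
    (h : ∀ n a, a ∈ φ.props → (a ∈ σ n ↔ a ∈ σ' n)) :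
    ∀ n, φ.SatAt σ n ↔ φ.SatAt σ' n := by
  induction φ with
  | atom a => intro n; exact h n a rfl
  | tt => intro n; rfl
  | not φ ih =>
      intro n; exact not_congr (ih (fun n a ha => h n a ha) n)
  | or φ ψ ih₁ ih₂ =>
      intro n
      exact or_congr (ih₁ (fun n a ha => h n a (Or.inl ha)) n)
        (ih₂ (fun n a ha => h n a (Or.inr ha)) n)
  | and φ ψ ih₁ ih₂ =>
      intro n
      exact and_congr (ih₁ (fun n a ha => h n a (Or.inl ha)) n)
        (ih₂ (fun n a ha => h n a (Or.inr ha)) n)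
  | next φ ih => intro n; exact ih (fun n a ha => h n a ha) (n + 1)
  | until_ φ ψ ih₁ ih₂ =>
      intro n
      refine exists_congr fun m => and_congr Iff.rfl (and_congr
        (ih₂ (fun n a ha => h n a (Or.inr ha)) m) ?_)
      exact forall_congr' fun k => imp_congr Iff.rfl (imp_congr Iff.rfl
        (ih₁ (fun n a ha => h n a (Or.inl ha)) k))

/-- the languages of two conjuncts over sub-alphabets are
independent sublanguages of the language of the conjunction. -/
theorem conjuncts_independent_sublanguages [Finite α]
    (V V₁ V₂ : Set α) (hcup : V₁ ∪ V₂ = V)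
    (φ₁ φ₂ : LTL α) (hp₁ : φ₁.props ⊆ V₁) (hp₂ : φ₂.props ⊆ V₂) :
    comp (φ₁.LangOver V₁) V₁ (φ₂.LangOver V₂) V₂ = (φ₁.and φ₂).LangOver V := by
  ext σ
  constructor
  · rintro ⟨σ₁, ⟨hσ₁V, hσ₁⟩, σ₂, ⟨hσ₂V, hσ₂⟩, hcompat, rfl⟩
    have hcompat' : ∀ n, σ₁ n ∩ V₂ = σ₂ n ∩ V₁ := fun n => congrFun hcompat n
    constructor
    · intro n
      rw [← hcup]
      exact Set.union_subset_union (hσ₁V n) (hσ₂V n)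
    · constructor
      · refine (satAt_congr φ₁ (wordUnion σ₁ σ₂) σ₁ ?_ 0).mpr hσ₁
        intro n a ha
        constructor
        · rintro (h | h)
          · exact h
          · have : a ∈ σ₂ n ∩ V₁ := ⟨h, hp₁ ha⟩
            rw [← hcompat'] at this
            exact this.1
        · exact Or.inl
      · refine (satAt_congr φ₂ (wordUnion σ₁ σ₂) σ₂ ?_ 0).mpr hσ₂
        intro n a ha
        constructor
        · rintro (h | h)
          · have : a ∈ σ₁ n ∩ V₂ := ⟨h, hp₂ ha⟩
            rw [hcompat'] at this
            exact this.1
          · exact h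
        · exact Or.inr
  · rintro ⟨hV, h₁, h₂⟩
    refine ⟨restrict σ V₁, ⟨fun n => Set.inter_subset_right, ?_⟩,
      restrict σ V₂, ⟨fun n => Set.inter_subset_right, ?_⟩, ?_, ?_⟩
    · refine (satAt_congr φ₁ σ (restrict σ V₁) ?_ 0).mp h₁
      intro n a ha
      exact ⟨fun h => ⟨h, hp₁ ha⟩, fun h => h.1⟩
    · refine (satAt_congr φ₂ σ (restrict σ V₂) ?_ 0).mp h₂
      intro n a ha
      exact ⟨fun h => ⟨h, hp₂ ha⟩, fun h => h.1⟩
    · funext n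
      simp [restrict, Set.inter_assoc, Set.inter_comm V₁ V₂]
    · funext n
      have := hV n
      rw [← hcup] at this
      simp only [wordUnion, restrict]
      rw [← Set.inter_union_distrib_left]
      exact (Set.inter_eq_left.mpr this).symm

end SpecDecomp
end

section
/- Let V be a finite set of atomic propositions partitioned into inputs I and outputs O, and let φ = φ1 ∧ φ2 be an LTL formula over V with prop(φ1) ⊆ V1 and prop(φ2) ⊆ V2, where V1 ∪ V2 = V and V1 ∩ V2 ⊆ I. Assume that for k ∈ {1,2}, whenever { σ ∈ (2^{Vk})^ω | σ ⊨ φk } is not realizable by an implementation over variables Vk (with inputs I ∩ Vk and outputs O ∩ Vk), there exists а counterstrategy for it. Then φ is realizable (over variables V) if and only if both φ1 and φ2 are realizable (over V1 and V2, respectively). -/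
namespace SpecDecomp

variable {α : Type*}

lemma satAt_restrict {X : Set α} (σ : ℕ → Set α) :
    ∀ (φ : LTL α), φ.props ⊆ X → ∀ n, (LTL.SatAt (restrict σ X) φ n ↔ LTL.SatAt σ φ n) := by
  intro φ
  induction φ with
  | atom a =>
      intro hp n
      have ha : a ∈ X := hp rfl
      simp [LTL.SatAt, restrict, ha]
  | tt => intro _ n; simp [LTL.SatAt]
  | not φ ih =>
      intro hp n
      simp [LTL.SatAt, ih hp n]
  | or φ ψ ihφ ihψ =>
      intro hp n
      have h1 : φ.props ⊆ X := fun a ha => hp (Or.inl ha)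
      have h2 : ψ.props ⊆ X := fun a ha => hp (Or.inr ha)
      simp [LTL.SatAt, ihφ h1 n, ihψ h2 n]
  | and φ ψ ihφ ihψ =>
      intro hp n
      have h1 : φ.props ⊆ X := fun a ha => hp (Or.inl ha)
      have h2 : ψ.props ⊆ X := fun a ha => hp (Or.inr ha)
      simp [LTL.SatAt, ihφ h1 n, ihψ h2 n]
  | next φ ih =>
      intro hp n
      simp [LTL.SatAt, ih hp (n+1)]
  | until_ φ ψ ihφ ihψ =>
      intro hp n
      have h1 : φ.props ⊆ X := fun a ha => hp (Or.inl ha)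
      have h2 : ψ.props ⊆ X := fun a ha => hp (Or.inr ha)
      simp only [LTL.SatAt]
      constructor
      · rintro ⟨m, hm, hψ, hφ⟩
        exact ⟨m, hm, (ihψ h2 m).1 hψ, fun k hk1 hk2 => (ihφ h1 k).1 (hφ k hk1 hk2)⟩
      · rintro ⟨m, hm, hψ, hφ⟩
        exact ⟨m, hm, (ihψ h2 m).2 hψ, fun k hk1 hk2 => (ihφ h1 k).2 (hφ k hk1 hk2)⟩

lemma hist_succ (σ : ℕ → Set α) (n : ℕ) : hist σ (n+1) = hist σ n ++ [σ n] := by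
  simp [hist, List.range_succ]

lemma restrictFin_hist (σ : ℕ → Set α) (X : Set α) (n : ℕ) :
    restrictFin (hist σ n) X = hist (restrict σ X) n := by
  simp only [restrictFin, hist, List.map_map]
  rfl

/-- Key "hard direction" helper: an implementation forcing `φ` cannot coexist
with a counterstrategy for `LangOver φ V₁`. -/
lemma no_counter {I O V₁ : Set α} (hIO : I ∩ O = ∅)
    (φ : LTL α) (hp : φ.props ⊆ V₁)
    (f : List (Set α) → Set α → Set α) (hf : ∀ h i, f h i ⊆ O)
    (hsat : ∀ σ : ℕ → Set α, (∀ n, σ n ⊆ I ∪ O) →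
      (∀ n, f (hist σ n) (σ n ∩ I) = σ n ∩ O) → LTL.Sat σ φ)
    (fc : List (Set α) → Set α) (hfc : ∀ h, fc h ⊆ I ∩ V₁)
    (hcs : Counterstrategy V₁ (I ∩ V₁) fc (φ.LangOver V₁)) : False := by
  classical
  -- build the play
  set step : List (Set α) → Set α :=
    fun h => fc (restrictFin h V₁) ∪ f h (fc (restrictFin h V₁)) with hstep
  let H : ℕ → List (Set α) := fun n => Nat.rec [] (fun _ h => h ++ [step h]) n
  set σ : ℕ → Set α := fun n => step (H n) with hσ
  have hH : ∀ n, hist σ n = H n := by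
    intro n
    induction n with
    | zero => simp [hist, H]
    | succ n ih =>
        rw [hist_succ, ih]
  have hσdef : ∀ n, σ n = fc (restrictFin (hist σ n) V₁) ∪
      f (hist σ n) (fc (restrictFin (hist σ n) V₁)) := by
    intro n; rw [hH n]
  have hsub : ∀ n, σ n ⊆ I ∪ O := by
    intro n
    rw [hσdef n]
    apply Set.union_subset
    · exact fun a ha => Or.inl ((hfc _ ha).1)
    · exact fun a ha => Or.inr (hf _ _ ha)
  have hinI : ∀ n, σ n ∩ I = fc (restrictFin (hist σ n) V₁) := by
    intro n
    rw [hσdef n]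
    ext a
    constructor
    · rintro ⟨ha | ha, haI⟩
      · exact ha
      · exact absurd (show a ∈ I ∩ O from ⟨haI, hf _ _ ha⟩) (by rw [hIO]; exact id)
    · intro ha
      exact ⟨Or.inl ha, (hfc _ ha).1⟩
  have hinO : ∀ n, σ n ∩ O = f (hist σ n) (fc (restrictFin (hist σ n) V₁)) := by
    intro n
    rw [hσdef n]
    ext a
    constructor
    · rintro ⟨ha | ha, haO⟩
      · exact absurd (show a ∈ I ∩ O from ⟨(hfc _ ha).1, haO⟩) (by rw [hIO]; exact id)
      · exact ha
    · intro ha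
      exact ⟨Or.inr ha, hf _ _ ha⟩
  have hcompat : ∀ n, f (hist σ n) (σ n ∩ I) = σ n ∩ O := by
    intro n; rw [hinI n, hinO n]
  have hSat : LTL.Sat σ φ := hsat σ hsub hcompat
  -- the restriction is compatible with the counterstrategy and satisfies φ
  refine hcs (restrict σ V₁) ⟨fun n => Set.inter_subset_right, ?_⟩ ?_
  · intro n
    rw [← restrictFin_hist]
    ext a
    simp only [restrict, Set.mem_inter_iff]
    constructor
    · intro ha
      obtain ⟨haI, haV⟩ := hfc _ ha
      have hm : a ∈ σ n ∩ I := by rw [hinI n]; exact ha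
      exact ⟨⟨hm.1, haV⟩, haI, haV⟩
    · rintro ⟨⟨ha, _⟩, haI, _⟩
      have hm : a ∈ σ n ∩ I := ⟨ha, haI⟩
      rw [hinI n] at hm; exact hm
  · exact ⟨fun n => Set.inter_subset_right, (satAt_restrict σ φ hp 0).2 hSat⟩

/-- equirealizability of a conjunction and its conjuncts that
only share input variables. -/
theorem conjunction_equirealizable
    (V I O : Set α) (hVfin : V.Finite) (hpart : I ∪ O = V) (hIO : I ∩ O = ∅)
    (V₁ V₂ : Set α) (hcup : V₁ ∪ V₂ = V) (hcap : V₁ ∩ V₂ ⊆ I)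
    (φ₁ φ₂ : LTL α) (hp₁ : φ₁.props ⊆ V₁) (hp₂ : φ₂.props ⊆ V₂)
    (hcs₁ : ¬ Realizable V₁ (I ∩ V₁) (O ∩ V₁) (φ₁.LangOver V₁) →
      ∃ fc : List (Set α) → Set α, (∀ h, fc h ⊆ I ∩ V₁) ∧
        Counterstrategy V₁ (I ∩ V₁) fc (φ₁.LangOver V₁))
    (hcs₂ : ¬ Realizable V₂ (I ∩ V₂) (O ∩ V₂) (φ₂.LangOver V₂) →
      ∃ fc : List (Set α) → Set α, (∀ h, fc h ⊆ I ∩ V₂) ∧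
        Counterstrategy V₂ (I ∩ V₂) fc (φ₂.LangOver V₂)) :
    Realizable V I O ((φ₁.and φ₂).LangOver V) ↔
      (Realizable V₁ (I ∩ V₁) (O ∩ V₁) (φ₁.LangOver V₁) ∧
       Realizable V₂ (I ∩ V₂) (O ∩ V₂) (φ₂.LangOver V₂)) := by
  classical
  have hIOc : ∀ a, a ∈ I → a ∈ O → False := by
    intro a h1 h2
    have : a ∈ I ∩ O := ⟨h1, h2⟩
    rw [hIO] at this; exact this
  constructor
  · -- hard direction
    rintro ⟨f, hfO, hreal⟩
    have hsat : ∀ (ψ : LTL α), (∀ σ, σ ∈ (φ₁.and φ₂).LangOver V → LTL.Sat σ ψ) →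
        ∀ σ : ℕ → Set α, (∀ n, σ n ⊆ I ∪ O) →
          (∀ n, f (hist σ n) (σ n ∩ I) = σ n ∩ O) → LTL.Sat σ ψ := by
      intro ψ hψ σ h1 h2
      exact hψ σ (hreal σ ⟨fun n => hpart ▸ h1 n, h2⟩)
    constructor
    · by_contra hnr
      obtain ⟨fc, hfc, hcs⟩ := hcs₁ hnr
      exact no_counter hIO φ₁ hp₁ f hfO
        (hsat φ₁ (fun σ hσ => hσ.2.1)) fc hfc hcs
    · by_contra hnr
      obtain ⟨fc, hfc, hcs⟩ := hcs₂ hnr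
      exact no_counter hIO φ₂ hp₂ f hfO
        (hsat φ₂ (fun σ hσ => hσ.2.2)) fc hfc hcs
  · -- easy direction: compose implementations
    rintro ⟨⟨f₁, hf₁O, hreal₁⟩, ⟨f₂, hf₂O, hreal₂⟩⟩
    refine ⟨fun h i => f₁ (restrictFin h V₁) (i ∩ V₁) ∪ f₂ (restrictFin h V₂) (i ∩ V₂),
      ?_, ?_⟩
    · intro h i
      apply Set.union_subset
      · exact fun a ha => (hf₁O _ _ ha).1
      · exact fun a ha => (hf₂O _ _ ha).1
    · rintro σ ⟨hsub, hcompat⟩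
      have key : ∀ (V' : Set α) (f' : List (Set α) → Set α → Set α),
          (∀ h i, f' h i ⊆ O ∩ V') → V' ⊆ V →
          (∀ n, f' (restrictFin (hist σ n) V') (σ n ∩ I ∩ V')
            = σ n ∩ O ∩ V') →
          CompatibleImpl V' (I ∩ V') (O ∩ V') f' (restrict σ V') := by
        intro V' f' hO' _ heq
        refine ⟨fun n => Set.inter_subset_right, fun n => ?_⟩
        rw [← restrictFin_hist σ V' n]
        have e1 : restrict σ V' n ∩ (I ∩ V') = σ n ∩ I ∩ V' := by
          ext a; simp [restrict]; tauto
        have e2 : restrict σ V' n ∩ (O ∩ V') = σ n ∩ O ∩ V' := by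
          ext a; simp [restrict]; tauto
        rw [e1, e2, heq n]
      -- intersect the global compatibility with V₁ and V₂
      have hmain : ∀ n, f₁ (restrictFin (hist σ n) V₁) (σ n ∩ I ∩ V₁) ∪
          f₂ (restrictFin (hist σ n) V₂) (σ n ∩ I ∩ V₂) = σ n ∩ O := hcompat
      have hside : ∀ a, a ∈ V₁ → a ∈ V₂ → a ∈ O → False := by
        intro a h1 h2 h3; exact hIOc a (hcap ⟨h1, h2⟩) h3
      have heq₁ : ∀ n, f₁ (restrictFin (hist σ n) V₁) (σ n ∩ I ∩ V₁)
          = σ n ∩ O ∩ V₁ := by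
        intro n
        have := hmain n
        ext a
        constructor
        · intro ha
          have h1 := hf₁O (restrictFin (hist σ n) V₁) (σ n ∩ I ∩ V₁) ha
          have : a ∈ σ n ∩ O := this ▸ Or.inl ha
          exact ⟨this, h1.2⟩
        · rintro ⟨haO, haV₁⟩
          have : a ∈ f₁ (restrictFin (hist σ n) V₁) (σ n ∩ I ∩ V₁) ∪
              f₂ (restrictFin (hist σ n) V₂) (σ n ∩ I ∩ V₂) := this ▸ haO
          rcases this with h | h
          · exact h
          · exact absurd haV₁ (fun hV₁ =>
              hside a hV₁ (hf₂O _ _ h).2 (hf₂O _ _ h).1)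
      have heq₂ : ∀ n, f₂ (restrictFin (hist σ n) V₂) (σ n ∩ I ∩ V₂)
          = σ n ∩ O ∩ V₂ := by
        intro n
        have := hmain n
        ext a
        constructor
        · intro ha
          have h2 := hf₂O (restrictFin (hist σ n) V₂) (σ n ∩ I ∩ V₂) ha
          have : a ∈ σ n ∩ O := this ▸ Or.inr ha
          exact ⟨this, h2.2⟩
        · rintro ⟨haO, haV₂⟩
          have : a ∈ f₁ (restrictFin (hist σ n) V₁) (σ n ∩ I ∩ V₁) ∪
              f₂ (restrictFin (hist σ n) V₂) (σ n ∩ I ∩ V₂) := this ▸ haO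
          rcases this with h | h
          · exact absurd haV₂ (fun hV₂ =>
              hside a (hf₁O _ _ h).2 hV₂ (hf₁O _ _ h).1)
          · exact h
      have hc₁ := key V₁ f₁ hf₁O (hcup ▸ Set.subset_union_left) heq₁
      have hc₂ := key V₂ f₂ hf₂O (hcup ▸ Set.subset_union_right) heq₂
      have hL₁ := hreal₁ _ hc₁
      have hL₂ := hreal₂ _ hc₂
      refine ⟨hsub, ?_, ?_⟩
      · exact (satAt_restrict σ φ₁ hp₁ 0).1 hL₁.2
      · exact (satAt_restrict σ φ₂ hp₂ 0).1 hL₂.2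

end SpecDecomp
end
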